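/- arXiv:0909.2777 — 13 statements merged into one kernel-verified Lean document; each statement's English description precedes it below -/
import Mathlib

section
/- Let 0 < a ≤ 1, P > 0 with aP ≥ 1, and C12 ≥ 0. Set Pu = 1/a, Pw = (P − 1/a)/(1 + 1/b), D = Pu + 2, R1 = C((2+a)Pw/D), R3 = C((1+a)Pw/D) + C12, R4 = C((1+a)Pw/D) + C(aPw/D), and R5 = (3/2)·C((1+a)Pw/D). Then R1 − min{R3, R4, R5} ≤ 1/2. -/
/-- Step 1 in the proof of Theorem 1: with the universal power allocation,
`R1` exceeds each of `R3, R4, R5` by at most half a bit.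
Here `C x = (1/2)·log₂(1+x)` and `b = (1+√a)²`. -/
theorem stmt_2 (a P C12 : ℝ) (ha0 : 0 < a) (ha1 : a ≤ 1) (hP : 0 < P)
    (haP : 1 ≤ a * P) (hC12 : 0 ≤ C12) :
    let C : ℝ → ℝ := fun x => (1 / 2) * Real.logb 2 (1 + x)
    let b : ℝ := (1 + Real.sqrt a) ^ 2
    let Pu : ℝ := 1 / a
    let Pw : ℝ := (P - 1 / a) / (1 + 1 / b)
    let D : ℝ := Pu + 2
    let R1 : ℝ := C ((2 + a) * Pw / D)
    let R3 : ℝ := C ((1 + a) * Pw / D) + C12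
    let R4 : ℝ := C ((1 + a) * Pw / D) + C (a * Pw / D)
    let R5 : ℝ := (3 / 2) * C ((1 + a) * Pw / D)
    R1 - min R3 (min R4 R5) ≤ 1 / 2 := by
  intro C b Pu Pw D R1 R3 R4 R5
  have hb : 0 < b := by
    have := Real.sqrt_nonneg a
    positivity
  have hPw : 0 ≤ Pw := by
    apply div_nonneg
    · have h1 : 1 / a ≤ P := by
        rw [div_le_iff₀ ha0]
        linarith [haP, mul_comm a P]
      linarith
    · positivity
  have hD : 0 < D := by
    have : 0 < 1 / a := by positivity
    simp only [D, Pu]; linarith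
  set x : ℝ := Pw / D with hxdef
  have hx : 0 ≤ x := div_nonneg hPw hD.le
  have e2 : (2 + a) * Pw / D = (2 + a) * x := by rw [mul_div_assoc]
  have e1 : (1 + a) * Pw / D = (1 + a) * x := by rw [mul_div_assoc]
  have ea : a * Pw / D = a * x := by rw [mul_div_assoc]
  have hpos1 : (0:ℝ) < 1 + (1 + a) * x := by nlinarith
  have hpos2 : (0:ℝ) < 1 + (2 + a) * x := by nlinarith
  -- key log inequality
  have key : Real.logb 2 (1 + (2 + a) * x) ≤ 1 + Real.logb 2 (1 + (1 + a) * x) := by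
    have harg : 1 + (2 + a) * x ≤ 2 * (1 + (1 + a) * x) := by nlinarith
    have := Real.logb_le_logb_of_le (b := 2) (by norm_num) hpos2 harg
    calc Real.logb 2 (1 + (2 + a) * x) ≤ Real.logb 2 (2 * (1 + (1 + a) * x)) := this
      _ = 1 + Real.logb 2 (1 + (1 + a) * x) := by
          rw [Real.logb_mul (by norm_num) (ne_of_gt hpos1)]
          simp [Real.logb_self_eq_one]
  have hnn1 : 0 ≤ Real.logb 2 (1 + (1 + a) * x) := by
    apply Real.logb_nonneg (by norm_num)
    nlinarith
  have hnna : 0 ≤ Real.logb 2 (1 + a * x) := by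
    apply Real.logb_nonneg (by norm_num)
    nlinarith
  have hC21 : C ((2 + a) * Pw / D) - C ((1 + a) * Pw / D) ≤ 1 / 2 := by
    simp only [C, e1, e2]
    linarith
  rw [sub_le_comm, le_min_iff, le_min_iff]
  refine ⟨?_, ?_, ?_⟩ <;> simp only [R1, R3, R4, R5, C, e1, e2, ea]
  · linarith
  · linarith
  · linarith
end

section
/- Let 0 < a ≤ 1 and P > 0 with aP ≥ 1. Set Pu = 1/a, Pw = (P − 1/a)/(1 + 1/b), and define R1' = C((2+a)·Pw/(Pu+2)) + log₂(1 + 1/(2a)) and Rub1 = (1/2)·log₂(1 + b·P) + (1/2)·log₂((1+P)/(1+aP)). Then Rub1 − R1' ≤ 1.2. -/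
private lemma key_poly (s u : ℝ) (hs0 : 0 < s) (hs1 : s ≤ 1) (hu : 0 ≤ u) :
    4 * ((1 + s) ^ 2 + 1) * (s ^ 2 + (1 + s) ^ 2 * (1 + u)) * (s ^ 2 + (1 + u)) ≤
    5 * (2 + u) * (1 + 2 * s ^ 2) *
      ((1 + 2 * s ^ 2) * ((1 + s) ^ 2 + 1) + (2 + s ^ 2) * (1 + s) ^ 2 * u) := by
  have hs := hs0.le
  have h7 : (0:ℝ) ≤ u ^ 2 * (7 * s ^ 2 - 4 * s + 2) := by
    have : (0:ℝ) ≤ 7 * s ^ 2 - 4 * s + 2 := by nlinarith [sq_nonneg (7 * s - 2)]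
    positivity
  nlinarith [h7, hu, hs, hs1, mul_nonneg hs hu,
    mul_nonneg (mul_nonneg hs hs) hu,
    mul_nonneg (mul_nonneg hs hs) (mul_nonneg hu hu),
    mul_nonneg (pow_nonneg hs 3) hu,
    mul_nonneg (pow_nonneg hs 3) (mul_nonneg hu hu),
    mul_nonneg (pow_nonneg hs 4) hu,
    mul_nonneg (pow_nonneg hs 4) (mul_nonneg hu hu),
    mul_nonneg (pow_nonneg hs 5) hu,
    mul_nonneg (pow_nonneg hs 5) (mul_nonneg hu hu),
    mul_nonneg (pow_nonneg hs 6) hu,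
    mul_nonneg (pow_nonneg hs 6) (mul_nonneg hu hu),
    pow_nonneg hs 2, pow_nonneg hs 3, pow_nonneg hs 4, pow_nonneg hs 5, pow_nonneg hs 6]

private lemma logb_five : Real.logb 2 5 ≤ 12 / 5 := by
  rw [Real.logb, div_le_iff₀ (Real.log_pos one_lt_two)]
  have h1 : Real.log ((5:ℝ) ^ (5:ℕ)) ≤ Real.log ((2:ℝ) ^ (12:ℕ)) :=
    Real.log_le_log (by positivity) (by norm_num)
  rw [Real.log_pow, Real.log_pow] at h1
  push_cast at h1
  linarith

/-- Step 2 (Δ₁ ≤ 1.2) in the proof of Theorem 1. Here `C x = (1/2)·log₂(1+x)`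
and `b = (1+√a)²`. -/
theorem stmt_3 (a P : ℝ) (ha0 : 0 < a) (ha1 : a ≤ 1) (hP : 0 < P) (haP : 1 ≤ a * P) :
    let b : ℝ := (1 + Real.sqrt a) ^ 2
    let Pu : ℝ := 1 / a
    let Pw : ℝ := (P - 1 / a) / (1 + 1 / b)
    let R1' : ℝ := (1 / 2) * Real.logb 2 (1 + (2 + a) * Pw / (Pu + 2)) +
      Real.logb 2 (1 + 1 / (2 * a))
    let Rub1 : ℝ := (1 / 2) * Real.logb 2 (1 + b * P) +
      (1 / 2) * Real.logb 2 ((1 + P) / (1 + a * P))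
    Rub1 - R1' ≤ 1.2 := by
  intro b Pu Pw R1' Rub1
  have hbdef : b = (1 + Real.sqrt a) ^ 2 := rfl
  have hPudef : Pu = 1 / a := rfl
  have hPwdef : Pw = (P - 1 / a) / (1 + 1 / b) := rfl
  have hR1 : R1' = (1 / 2) * Real.logb 2 (1 + (2 + a) * Pw / (Pu + 2)) +
      Real.logb 2 (1 + 1 / (2 * a)) := rfl
  have hRub : Rub1 = (1 / 2) * Real.logb 2 (1 + b * P) +
      (1 / 2) * Real.logb 2 ((1 + P) / (1 + a * P)) := rfl
  rw [hRub, hR1, hPwdef, hPudef, hbdef]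
  set s := Real.sqrt a with hs
  have hs0 : 0 < s := Real.sqrt_pos.mpr ha0
  have hs1 : s ≤ 1 := by
    rw [hs, show (1:ℝ) = Real.sqrt 1 by simp]
    exact Real.sqrt_le_sqrt ha1
  have hsa : s ^ 2 = a := Real.sq_sqrt ha0.le
  have htP : 1 ≤ s ^ 2 * P := by rw [hsa]; exact haP
  rw [← hsa]
  clear hsa ha0 ha1 hs haP
  have hu : 0 ≤ s ^ 2 * P - 1 := by linarith
  -- abbreviations
  set N : ℝ := (1 + 2 * s ^ 2) * ((1 + s) ^ 2 + 1) + (2 + s ^ 2) * (1 + s) ^ 2 * (s ^ 2 * P - 1)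
    with hNdef
  set M : ℝ := (1 + 2 * s ^ 2) * ((1 + s) ^ 2 + 1) with hMdef
  have hM : 0 < M := by rw [hMdef]; positivity
  have hN : 0 < N := by
    rw [hNdef]
    have : 0 ≤ (2 + s ^ 2) * (1 + s) ^ 2 * (s ^ 2 * P - 1) := by positivity
    nlinarith [sq_nonneg s]
  have hX : 1 + (2 + s ^ 2) * ((P - 1 / s ^ 2) / (1 + 1 / (1 + s) ^ 2)) / (1 / s ^ 2 + 2)
      = N / M := by
    rw [hNdef, hMdef]
    have h1 : (1 + s) ^ 2 ≠ 0 := by positivity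
    have h2 : (s:ℝ) ^ 2 ≠ 0 := by positivity
    have h3 : (1 + s) ^ 2 + 1 ≠ 0 := by positivity
    have h4 : (1:ℝ) + 2 * s ^ 2 ≠ 0 := by positivity
    field_simp
  rw [hX]
  have hA1 : (0:ℝ) < 1 + (1 + s) ^ 2 * P := by positivity
  have hA2 : (0:ℝ) < (1 + P) / (1 + s ^ 2 * P) := by positivity
  have hXp : (0:ℝ) < N / M := div_pos hN hM
  have h2a : (0:ℝ) < 1 + 1 / (2 * s ^ 2) := by positivity
  set A : ℝ := (1 + (1 + s) ^ 2 * P) * ((1 + P) / (1 + s ^ 2 * P)) with hAdef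
  set B : ℝ := N / M * (1 + 1 / (2 * s ^ 2)) ^ 2 with hBdef
  have hA : 0 < A := mul_pos hA1 hA2
  have hB : 0 < B := by rw [hBdef]; positivity
  have e1 : (1 / 2) * Real.logb 2 (1 + (1 + s) ^ 2 * P)
      + (1 / 2) * Real.logb 2 ((1 + P) / (1 + s ^ 2 * P)) = (1 / 2) * Real.logb 2 A := by
    rw [hAdef, Real.logb_mul hA1.ne' hA2.ne']; ring
  have e2 : (1 / 2) * Real.logb 2 (N / M) + Real.logb 2 (1 + 1 / (2 * s ^ 2))
      = (1 / 2) * Real.logb 2 B := by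
    rw [hBdef, Real.logb_mul hXp.ne' (pow_ne_zero 2 h2a.ne'), Real.logb_pow]
    push_cast; ring
  rw [e1, e2]
  -- main inequality A ≤ 5 B
  have hkey := key_poly s (s ^ 2 * P - 1) hs0 hs1 hu
  have hAB : A ≤ 5 * B := by
    have hden : (0:ℝ) < 4 * s ^ 4 * M * (1 + s ^ 2 * P) := by positivity
    have h5 : 5 * B - A =
        ((1 + 2 * s ^ 2) *
          (5 * (2 + (s ^ 2 * P - 1)) * (1 + 2 * s ^ 2) *
            ((1 + 2 * s ^ 2) * ((1 + s) ^ 2 + 1)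
              + (2 + s ^ 2) * (1 + s) ^ 2 * (s ^ 2 * P - 1)) -
           4 * ((1 + s) ^ 2 + 1) * (s ^ 2 + (1 + s) ^ 2 * (1 + (s ^ 2 * P - 1)))
             * (s ^ 2 + (1 + (s ^ 2 * P - 1)))))
        / (4 * s ^ 4 * M * (1 + s ^ 2 * P)) := by
      rw [hBdef, hAdef, hNdef, hMdef]
      have h2 : (s:ℝ) ^ 2 ≠ 0 := by positivity
      have h5' : (1:ℝ) + s ^ 2 * P ≠ 0 := by positivity
      have h6 : ((1:ℝ) + 2 * s ^ 2) * ((1 + s) ^ 2 + 1) ≠ 0 := by positivity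
      field_simp
      ring
    have hnum : 0 ≤ (1 + 2 * s ^ 2) *
          (5 * (2 + (s ^ 2 * P - 1)) * (1 + 2 * s ^ 2) *
            ((1 + 2 * s ^ 2) * ((1 + s) ^ 2 + 1)
              + (2 + s ^ 2) * (1 + s) ^ 2 * (s ^ 2 * P - 1)) -
           4 * ((1 + s) ^ 2 + 1) * (s ^ 2 + (1 + s) ^ 2 * (1 + (s ^ 2 * P - 1)))
             * (s ^ 2 + (1 + (s ^ 2 * P - 1)))) := by
      have h12 : (0:ℝ) ≤ 1 + 2 * s ^ 2 := by positivity
      exact mul_nonneg h12 (by linarith)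
    have := div_nonneg hnum hden.le
    linarith [h5 ▸ this]
  have hlog : Real.logb 2 A ≤ Real.logb 2 B + 12 / 5 := by
    have h1 : Real.logb 2 A ≤ Real.logb 2 (5 * B) :=
      Real.logb_le_logb_of_le one_lt_two hA hAB
    rw [Real.logb_mul (by norm_num) hB.ne'] at h1
    linarith [logb_five]
  have h12' : (1.2:ℝ) = 6 / 5 := by norm_num
  linarith
end

section
/- Let 0 < a ≤ 1 and set b = (1+√a)², A = 1+b, B = a·A, C' = (2+a)·(2a+1), and D' = (2a+1)·(a·b + a − 2√a). Then A·b + B ≤ 2^{2/5} · (C'·b + D'). -/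
/-- Step (III) in the proof of Theorem 1: with `b = (1+√a)²`, `A = 1+b`,
`B = aA`, `C' = (2+a)(2a+1)`, `D' = (2a+1)(ab+a−2√a)`, one has
`Ab + B ≤ 2^(2/5)·(C'b + D')`. -/
theorem stmt_4 (a : ℝ) (ha0 : 0 < a) (ha1 : a ≤ 1) :
    let b : ℝ := (1 + Real.sqrt a) ^ 2
    let A : ℝ := 1 + b
    let B : ℝ := a * A
    let C' : ℝ := (2 + a) * (2 * a + 1)
    let D' : ℝ := (2 * a + 1) * (a * b + a - 2 * Real.sqrt a)
    A * b + B ≤ (2 : ℝ) ^ ((2 : ℝ) / 5) * (C' * b + D') := by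
  intro b A B C' D'
  set s := Real.sqrt a with hs
  have hs0 : 0 < s := Real.sqrt_pos.mpr ha0
  have hs1 : s ≤ 1 := by
    rw [hs, show (1:ℝ) = Real.sqrt 1 by simp]
    exact Real.sqrt_le_sqrt ha1
  have hsa : s ^ 2 = a := Real.sq_sqrt ha0.le
  have hc : (131 : ℝ) / 100 ≤ (2 : ℝ) ^ ((2 : ℝ) / 5) := by
    have h2 : ((2:ℝ) ^ ((2:ℝ)/5)) ^ (5:ℕ) = 4 := by
      rw [← Real.rpow_natCast ((2:ℝ) ^ ((2:ℝ)/5)) 5, ← Real.rpow_mul (by norm_num)]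
      norm_num
    nlinarith [Real.rpow_pos_of_pos (by norm_num : (0:ℝ) < 2) ((2:ℝ)/5),
      pow_pos (Real.rpow_pos_of_pos (by norm_num : (0:ℝ) < 2) ((2:ℝ)/5)) 2,
      pow_pos (Real.rpow_pos_of_pos (by norm_num : (0:ℝ) < 2) ((2:ℝ)/5)) 3,
      pow_pos (Real.rpow_pos_of_pos (by norm_num : (0:ℝ) < 2) ((2:ℝ)/5)) 4]
  have hrhs : (0:ℝ) ≤ C' * b + D' := by
    show (0:ℝ) ≤ (2 + a) * (2 * a + 1) * (1 + s) ^ 2 +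
      (2 * a + 1) * (a * (1 + s) ^ 2 + a - 2 * s)
    rw [← hsa]
    nlinarith [sq_nonneg s, sq_nonneg (s-1), hsa, hs0.le, sq_nonneg (s*s), sq_nonneg (s*s*s)]
  have key : A * b + B ≤ (131 : ℝ) / 100 * (C' * b + D') := by
    show (1 + (1 + s)^2) * (1 + s)^2 + a * (1 + (1 + s)^2) ≤
      (131:ℝ)/100 * ((2 + a) * (2 * a + 1) * (1 + s) ^ 2 +
        (2 * a + 1) * (a * (1 + s) ^ 2 + a - 2 * s))
    rw [← hsa]
    nlinarith [sq_nonneg (s - 1/4), mul_nonneg hs0.le (sq_nonneg (s - 1/4)),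
      mul_nonneg (mul_nonneg hs0.le hs0.le) (sq_nonneg (s - 1/4)),
      mul_nonneg (mul_nonneg (mul_nonneg hs0.le hs0.le) hs0.le) (sq_nonneg (s - 1/4)),
      mul_nonneg (mul_nonneg (mul_nonneg (mul_nonneg hs0.le hs0.le) hs0.le) hs0.le) (sq_nonneg (s - 1/4)),
      sq_nonneg s, hs0.le]
  calc A * b + B ≤ (131 : ℝ) / 100 * (C' * b + D') := key
    _ ≤ (2 : ℝ) ^ ((2 : ℝ) / 5) * (C' * b + D') := by
        exact mul_le_mul_of_nonneg_right hc hrhs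
end

section
/- Let 0 < a ≤ 1 and P > 0 with aP ≥ 1. Set Pu = 1/a, Pw = (P − 1/a)/(1 + 1/b). Then log₂((P + (aP+1)²)/(aP+1)) − 2·C(a·Pw/(Pu+2)) − log₂(1 + 1/(2a)) ≤ 2. -/
/-- Step 3 (Δ₂ ≤ 2) in the proof of Theorem 1. Here `C x = (1/2)·log₂(1+x)`
and `b = (1+√a)²`; the cooperation capacity `C12` cancels. -/
theorem stmt_5 (a P : ℝ) (ha0 : 0 < a) (ha1 : a ≤ 1) (hP : 0 < P) (haP : 1 ≤ a * P) :
    let b : ℝ := (1 + Real.sqrt a) ^ 2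
    let Pu : ℝ := 1 / a
    let Pw : ℝ := (P - 1 / a) / (1 + 1 / b)
    Real.logb 2 ((P + (a * P + 1) ^ 2) / (a * P + 1)) -
      2 * ((1 / 2) * Real.logb 2 (1 + a * Pw / (Pu + 2))) -
      Real.logb 2 (1 + 1 / (2 * a)) ≤ 2 := by
  intro b Pu Pw
  have hs : 0 ≤ Real.sqrt a := Real.sqrt_nonneg a
  have hb1 : (1:ℝ) ≤ b := by simp only [b]; nlinarith
  have hb0 : (0:ℝ) < b := by linarith
  have hbinv : 1 + 1/b ≤ 2 := by
    have : 1/b ≤ 1 := by rw [div_le_one hb0]; exact hb1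
    linarith
  have hbpos : (0:ℝ) < 1 + 1/b := by positivity
  have hPa : 0 ≤ P - 1/a := by
    rw [sub_nonneg, div_le_iff₀ ha0]; nlinarith
  have hPw : (P - 1/a)/2 ≤ Pw := by
    simp only [Pw]; gcongr
  have hPu2 : (0:ℝ) < Pu + 2 := by simp only [Pu]; positivity
  set x : ℝ := (P + (a * P + 1) ^ 2) / (a * P + 1) with hxdef
  set y : ℝ := 1 + a * Pw / (Pu + 2) with hydef
  set z : ℝ := 1 + 1 / (2 * a) with hzdef
  have hy' : 1 + a * ((P - 1/a)/2) / (Pu + 2) ≤ y := by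
    simp only [hydef]; gcongr
  have hy'pos : (0:ℝ) < 1 + a * ((P - 1/a)/2) / (Pu + 2) := by positivity
  have hy0 : 0 < y := lt_of_lt_of_le hy'pos hy'
  have hz0 : 0 < z := by simp only [hzdef]; positivity
  have hx0 : 0 < x := by
    apply div_pos <;> nlinarith
  have hz0' : (0:ℝ) < 1 + 1/(2*a) := hz0
  -- key algebraic inequality
  have hkey : x ≤ 4 * y * z := by
    have h1 : x ≤ 4 * (1 + a * ((P - 1/a)/2) / (Pu + 2)) * z := by
      simp only [hxdef, hzdef, Pu]
      rw [div_le_iff₀ (by nlinarith : (0:ℝ) < a * P + 1)]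
      have hPu2' : (0:ℝ) < 1/a + 2 := by positivity
      have e1 : a * ((P - 1/a)/2) / (1/a + 2) = (a * a * P - a) / (2 * (1 + 2*a)) := by
        field_simp
      rw [e1]
      have h2a : (0:ℝ) < 2 * (1 + 2*a) := by linarith
      have e2 : 4 * (1 + (a*a*P - a)/(2*(1+2*a))) * (1 + 1/(2*a)) * (a*P+1)
          = (4*(2*(1+2*a)+(a*a*P-a))*(2*a+1)*(a*P+1)) / (2*(1+2*a)*(2*a)) := by
        field_simp
      rw [e2, le_div_iff₀ (by positivity : (0:ℝ) < 2*(1+2*a)*(2*a))]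
      nlinarith [mul_pos ha0 hP, sq_nonneg (a*P), mul_nonneg (mul_nonneg ha0.le ha0.le) hP.le]
    calc x ≤ 4 * (1 + a * ((P - 1/a)/2) / (Pu + 2)) * z := h1
      _ ≤ 4 * y * z := by gcongr
  have hlog : Real.logb 2 x ≤ Real.logb 2 (4 * y * z) :=
    Real.logb_le_logb_of_le (by norm_num) hx0 hkey
  have hsplit : Real.logb 2 (4 * y * z) = 2 + Real.logb 2 y + Real.logb 2 z := by
    rw [Real.logb_mul (by positivity) (ne_of_gt hz0),
        Real.logb_mul (by norm_num) (ne_of_gt hy0)]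
    have : Real.logb 2 4 = 2 := by
      rw [show (4:ℝ) = 2^(2:ℕ) by norm_num, Real.logb_pow, Real.logb_self_eq_one] <;> norm_num
    rw [this]
  have := hlog
  rw [hsplit] at this
  linarith
end

section
/- Let 0 < a ≤ 1 and P > 0 with aP ≥ 1 and a³P² ≤ a + 1. Then log₂((P + (aP+1)²)/(aP+1)) − log₂((2a+1)/(2a)) ≤ 1. -/
/-- Case I of Theorem 2 (full cooperation PA, weak interference):
when `aP ≥ 1` and `a³P² ≤ a+1`, the genie-aided bound exceeds the achievable
full-cooperation rate by at most 1 bit (the `C12` terms cancel). -/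
theorem stmt_6 (a P : ℝ) (ha0 : 0 < a) (ha1 : a ≤ 1) (hP : 0 < P)
    (haP : 1 ≤ a * P) (hcond : a ^ 3 * P ^ 2 ≤ a + 1) :
    Real.logb 2 ((P + (a * P + 1) ^ 2) / (a * P + 1)) -
      Real.logb 2 ((2 * a + 1) / (2 * a)) ≤ 1 := by
  have hden : (0:ℝ) < a * P + 1 := by nlinarith
  have hX : (0:ℝ) < (P + (a * P + 1) ^ 2) / (a * P + 1) := by positivity
  have hY : (0:ℝ) < (2 * a + 1) / (2 * a) := by positivity
  have h2Y : 2 * ((2 * a + 1) / (2 * a)) = (2 * a + 1) / a := by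
    field_simp
  have key : (P + (a * P + 1) ^ 2) / (a * P + 1) ≤ 2 * ((2 * a + 1) / (2 * a)) := by
    rw [h2Y, div_le_div_iff₀ hden ha0]
    nlinarith [sq_nonneg (a * P - 1)]
  have h1 : Real.logb 2 ((P + (a * P + 1) ^ 2) / (a * P + 1)) ≤
      Real.logb 2 (2 * ((2 * a + 1) / (2 * a))) :=
    Real.logb_le_logb_of_le one_lt_two hX key
  have h2 : Real.logb 2 (2 * ((2 * a + 1) / (2 * a))) =
      1 + Real.logb 2 ((2 * a + 1) / (2 * a)) := by
    rw [Real.logb_mul (by norm_num) (ne_of_gt hY), Real.logb_self_eq_one one_lt_two]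
  linarith [h1, h2.le]
end

section
/- Let 0 < a ≤ 1 and P > 0 with aP ≥ 1, and set b = (1+√a)². Then [(1/2)·log₂(1 + b·P) + (1/2)·log₂((1+P)/(1+aP))] − [(1/2)·log₂(1 + b·(aP−1)/(2a+1)) + log₂(1 + 1/(2a))] ≤ 3/2. -/
/-- Case II of Theorem 2 (full cooperation PA, weak interference): the
full-cooperation sum-rate is within 1.5 bits of the upper bound `Rub1`.
Here `b = (1+√a)²`. -/
theorem stmt_7 (a P : ℝ) (ha0 : 0 < a) (ha1 : a ≤ 1) (hP : 0 < P) (haP : 1 ≤ a * P) :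
    let b : ℝ := (1 + Real.sqrt a) ^ 2
    ((1 / 2) * Real.logb 2 (1 + b * P) +
        (1 / 2) * Real.logb 2 ((1 + P) / (1 + a * P))) -
      ((1 / 2) * Real.logb 2 (1 + b * (a * P - 1) / (2 * a + 1)) +
        Real.logb 2 (1 + 1 / (2 * a))) ≤ 3 / 2 := by
  intro b
  set s := Real.sqrt a with hs
  have hs0 : 0 < s := Real.sqrt_pos.mpr ha0
  have hs2 : s ^ 2 = a := Real.sq_sqrt ha0.le
  have hs1 : s ≤ 1 := by
    rw [hs, show (1:ℝ) = Real.sqrt 1 by simp]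
    exact Real.sqrt_le_sqrt ha1
  have hb : b = (1 + s) ^ 2 := rfl
  have hbpos : 0 < b := by rw [hb]; positivity
  set X1 : ℝ := 1 + b * P with hX1def
  set X2 : ℝ := (1 + P) / (1 + a * P) with hX2def
  set Y1 : ℝ := 1 + b * (a * P - 1) / (2 * a + 1) with hY1def
  set Z : ℝ := 1 + 1 / (2 * a) with hZdef
  have h2a : 0 < 2 * a + 1 := by linarith
  have haP1 : 0 < 1 + a * P := by nlinarith
  have hX1 : 0 < X1 := by rw [hX1def]; nlinarith
  have hX2 : 0 < X2 := by rw [hX2def]; positivity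
  have hY1 : 0 < Y1 := by
    rw [hY1def]
    have : 0 ≤ b * (a * P - 1) / (2 * a + 1) :=
      div_nonneg (mul_nonneg hbpos.le (by linarith)) h2a.le
    linarith
  have hZ : 0 < Z := by rw [hZdef]; positivity
  -- key algebraic inequality
  have key : X1 * X2 ≤ 8 * (Y1 * (Z * Z)) := by
    rw [hX1def, hX2def, hY1def, hZdef, hb, ← hs2]
    have h2a' : (0:ℝ) < 2 * s ^ 2 + 1 := by positivity
    have haP1' : (0:ℝ) < 1 + s ^ 2 * P := by rw [hs2]; exact haP1
    rw [← mul_div_assoc, div_le_iff₀ haP1']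
    have hss : (0:ℝ) < s ^ 2 := by positivity
    field_simp
    have hu : (0:ℝ) ≤ s ^ 2 * P - 1 := by rw [hs2]; linarith
    have hc0 : (0:ℝ) ≤ 3 - 2 * s + 13 * s ^ 2 - 2 * s ^ 3 + 14 * s ^ 4 := by
      nlinarith [sq_nonneg (1 - s), mul_nonneg (sub_nonneg.mpr hs1) (sq_nonneg s),
        sq_nonneg s, sq_nonneg (s ^ 2)]
    have h1 : (0:ℝ) ≤ (2 * s ^ 2 + 1) *
        ((s ^ 2 * P - 1) * (4 + 4 * s + 16 * s ^ 2 + 14 * s ^ 3 + 15 * s ^ 4)) :=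
      mul_nonneg h2a'.le (mul_nonneg hu (by positivity))
    have h2 : (0:ℝ) ≤ (2 * s ^ 2 + 1) *
        ((s ^ 2 * P - 1) ^ 2 * (1 + 2 * s + 5 * s ^ 2 + 8 * s ^ 3 + 4 * s ^ 4)) :=
      mul_nonneg h2a'.le (mul_nonneg (sq_nonneg _) (by positivity))
    have h3 : (0:ℝ) ≤ (2 * s ^ 2 + 1) *
        (3 - 2 * s + 13 * s ^ 2 - 2 * s ^ 3 + 14 * s ^ 4) :=
      mul_nonneg h2a'.le hc0
    nlinarith [h1, h2, h3]
  have l1 : Real.logb 2 (X1 * X2) = Real.logb 2 X1 + Real.logb 2 X2 :=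
    Real.logb_mul hX1.ne' hX2.ne'
  have l2 : Real.logb 2 (8 * (Y1 * (Z * Z)))
      = 3 + (Real.logb 2 Y1 + (Real.logb 2 Z + Real.logb 2 Z)) := by
    rw [Real.logb_mul (by norm_num) (by positivity),
      Real.logb_mul hY1.ne' (by positivity), Real.logb_mul hZ.ne' hZ.ne',
      show (8:ℝ) = 2 ^ (3:ℕ) by norm_num, Real.logb_pow,
      Real.logb_self_eq_one (by norm_num)]
    ring
  have mono : Real.logb 2 (X1 * X2) ≤ Real.logb 2 (8 * (Y1 * (Z * Z))) :=
    Real.logb_le_logb_of_le (by norm_num) (by positivity) key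
  linarith [mono, l1, l2]
end

section
/- Let 0 ≤ P ≤ 1, C12 ≥ 0, and a ≥ 1, and set b = (1+√a)². Then min{C12 + 2·C(P), C(b·P)} − min{C12, C(b·P)} ≤ 1. -/
/-- Gap analysis for the strong interference regime case `P ≤ 1 ≤ a`, with
`C x = (1/2)·log₂(1+x)` and `b = (1+√a)²`. -/
theorem stmt_10 (a P C12 : ℝ) (hP0 : 0 ≤ P) (hP1 : P ≤ 1) (hC12 : 0 ≤ C12)
    (ha : 1 ≤ a) :
    let C : ℝ → ℝ := fun x => (1 / 2) * Real.logb 2 (1 + x)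
    let b : ℝ := (1 + Real.sqrt a) ^ 2
    min (C12 + 2 * C P) (C (b * P)) - min C12 (C (b * P)) ≤ 1 := by
  intro C b
  have hd0 : 0 ≤ 2 * C P := by
    have : (0:ℝ) ≤ Real.logb 2 (1 + P) :=
      Real.logb_nonneg one_lt_two (by linarith)
    simp only [C]; linarith
  have hd1 : 2 * C P ≤ 1 := by
    have h1 : Real.logb 2 (1 + P) ≤ Real.logb 2 2 :=
      Real.logb_le_logb_of_le one_lt_two (by linarith : (0:ℝ) < 1+P) (by linarith : (1:ℝ)+P ≤ 2)
    have h2 : Real.logb 2 2 = 1 := Real.logb_self_eq_one (by norm_num)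
    simp only [C]; linarith
  have : min (C12 + 2 * C P) (C (b * P)) ≤ min C12 (C (b * P)) + 2 * C P := by
    rcases le_total C12 (C (b * P)) with h | h
    · calc min (C12 + 2 * C P) (C (b * P)) ≤ C12 + 2 * C P := min_le_left _ _
        _ = min C12 (C (b * P)) + 2 * C P := by rw [min_eq_left h]
    · calc min (C12 + 2 * C P) (C (b * P)) ≤ C (b * P) := min_le_right _ _
        _ ≤ min C12 (C (b * P)) + 2 * C P := by rw [min_eq_right h]; linarith
  linarith
end

section
/- For all real numbers a ≥ 1 and P ≥ 1, with b = (1+√a)², (1/2)·log₂(1 + b·P) − (1/2)·log₂(1 + P + a·P + 2√a) ≤ 1/2. -/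
/-- Gap analysis for the strong interference regime case `1 ≤ P ≤ a` with
`C12 > C(b/P)`: with `b = (1+√a)²`,
`(1/2)log₂(1+bP) − (1/2)log₂(1+P+aP+2√a) ≤ 1/2`. -/
theorem stmt_11 (a P : ℝ) (ha : 1 ≤ a) (hP : 1 ≤ P) :
    let b : ℝ := (1 + Real.sqrt a) ^ 2
    (1 / 2) * Real.logb 2 (1 + b * P) -
      (1 / 2) * Real.logb 2 (1 + P + a * P + 2 * Real.sqrt a) ≤ 1 / 2 := by
  intro b
  have hs : (1 : ℝ) ≤ Real.sqrt a := by
    rw [show (1:ℝ) = Real.sqrt 1 by simp]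
    exact Real.sqrt_le_sqrt ha
  have hsq : Real.sqrt a ^ 2 = a := Real.sq_sqrt (by linarith)
  have hamean : 2 * Real.sqrt a ≤ 1 + a := by nlinarith [sq_nonneg (Real.sqrt a - 1)]
  have hy : (1 : ℝ) < 1 + P + a * P + 2 * Real.sqrt a := by nlinarith
  have hkey : 1 + b * P ≤ 2 * (1 + P + a * P + 2 * Real.sqrt a) := by
    have hb : b = 1 + 2 * Real.sqrt a + a := by
      simp only [b]; ring_nf; nlinarith [hsq]
    rw [hb]
    nlinarith [hamean, hs]
  have h1 : Real.logb 2 (1 + b * P) ≤ Real.logb 2 (2 * (1 + P + a * P + 2 * Real.sqrt a)) := by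
    have hx : (0:ℝ) < 1 + b * P := by positivity
    exact Real.logb_le_logb_of_le one_lt_two hx hkey
  have h2 : Real.logb 2 (2 * (1 + P + a * P + 2 * Real.sqrt a))
      = 1 + Real.logb 2 (1 + P + a * P + 2 * Real.sqrt a) := by
    rw [Real.logb_mul (by norm_num) (by linarith)]
    simp [Real.logb_self_eq_one]
  linarith
end

section
/- Let 1 ≤ P ≤ a, set b = (1+√a)², and let 0 ≤ C12 ≤ C(b/P). Then min{C12 + 2·C(P), C(b·P)} − min{C12 + log₂ P, (1/2)·log₂(1 + P + a·P + 2√a)} ≤ 1. -/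
/-- Gap analysis for the strong interference regime case `1 ≤ P ≤ a` with
`C12 ≤ C(b/P)`, where `C x = (1/2)·log₂(1+x)` and `b = (1+√a)²`. -/
theorem stmt_12 (a P C12 : ℝ) (hP : 1 ≤ P) (hPa : P ≤ a) (hC0 : 0 ≤ C12)
    (hC1 : C12 ≤ (1 / 2) * Real.logb 2 (1 + (1 + Real.sqrt a) ^ 2 / P)) :
    let C : ℝ → ℝ := fun x => (1 / 2) * Real.logb 2 (1 + x)
    let b : ℝ := (1 + Real.sqrt a) ^ 2
    min (C12 + 2 * C P) (C (b * P)) -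
      min (C12 + Real.logb 2 P)
        ((1 / 2) * Real.logb 2 (1 + P + a * P + 2 * Real.sqrt a)) ≤ 1 := by
  intro C b
  have ha1 : (1:ℝ) ≤ a := le_trans hP hPa
  set s := Real.sqrt a with hs
  have hs1 : 1 ≤ s := by
    rw [hs, show (1:ℝ) = Real.sqrt 1 by simp]
    exact Real.sqrt_le_sqrt ha1
  have hsa : s ^ 2 = a := Real.sq_sqrt (by linarith)
  have hP0 : (0:ℝ) < P := by linarith
  -- First gap: (C12 + 2*C P) - (C12 + log₂ P) ≤ 1
  have hA : C12 + 2 * C P ≤ (C12 + Real.logb 2 P) + 1 := by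
    have h1 : (0:ℝ) < 1 + P := by linarith
    have hle : (1:ℝ) + P ≤ 2 * P := by linarith
    have hlog : Real.logb 2 (1 + P) ≤ Real.logb 2 (2 * P) :=
      Real.logb_le_logb_of_le one_lt_two (by linarith) hle
    have h2 : Real.logb 2 (2 * P) = 1 + Real.logb 2 P := by
      rw [Real.logb_mul (by norm_num) (ne_of_gt hP0), Real.logb_self_eq_one] <;> norm_num
    simp only [C]
    rw [h2] at hlog
    linarith
  -- Second gap
  have hB : C (b * P) ≤ (1 / 2) * Real.logb 2 (1 + P + a * P + 2 * s) + 1 := by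
    have hbP : b * P = P + 2 * s * P + a * P := by
      simp only [b]; ring_nf; nlinarith [hsa]
    have hD0 : (0:ℝ) < 1 + P + a * P + 2 * s := by nlinarith
    have hle : 1 + b * P ≤ 2 * (1 + P + a * P + 2 * s) := by
      rw [hbP]; nlinarith [sq_nonneg (s - 1), hP0]
    have hlog : Real.logb 2 (1 + b * P) ≤ Real.logb 2 (2 * (1 + P + a * P + 2 * s)) :=
      Real.logb_le_logb_of_le one_lt_two (by positivity) hle
    have h2 : Real.logb 2 (2 * (1 + P + a * P + 2 * s))
        = 1 + Real.logb 2 (1 + P + a * P + 2 * s) := by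
      rw [Real.logb_mul (by norm_num) (ne_of_gt hD0), Real.logb_self_eq_one] <;> norm_num
    simp only [C]
    rw [h2] at hlog
    linarith
  rcases min_cases (C12 + Real.logb 2 P)
      ((1 / 2) * Real.logb 2 (1 + P + a * P + 2 * s)) with ⟨h1, _⟩ | ⟨h1, _⟩ <;> rw [h1]
  · have := min_le_left (C12 + 2 * C P) (C (b * P)); linarith
  · have := min_le_right (C12 + 2 * C P) (C (b * P)); linarith
end

section
/- For all real numbers a and P with 0 < a ≤ 1, P > 0 and aP ≤ 1, (1/2)·log₂(1 + (1+√a)²·P) + (1/2)·log₂((1+P)/(1+aP)) − log₂(1 + P/(1+aP)) ≤ 1. -/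
/-- Case `a ≤ 1` of Theorem 4 (noise-limited regime `aP ≤ 1`): treating
interference as noise is within 1 bit of the upper bound `Rub1`. -/
theorem stmt_13 (a P : ℝ) (ha0 : 0 < a) (ha1 : a ≤ 1) (hP : 0 < P) (haP : a * P ≤ 1) :
    (1 / 2) * Real.logb 2 (1 + (1 + Real.sqrt a) ^ 2 * P) +
      (1 / 2) * Real.logb 2 ((1 + P) / (1 + a * P)) -
      Real.logb 2 (1 + P / (1 + a * P)) ≤ 1 := by
  set s := Real.sqrt a with hs
  have hs0 : 0 ≤ s := Real.sqrt_nonneg a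
  have hs2 : s ^ 2 = a := Real.sq_sqrt ha0.le
  have hs1 : s ≤ 1 := by nlinarith
  have hN : (0:ℝ) < 1 + a * P := by nlinarith
  set A : ℝ := 1 + (1 + s) ^ 2 * P with hA
  set B : ℝ := (1 + P) / (1 + a * P) with hB
  set C : ℝ := 1 + P / (1 + a * P) with hC
  have hApos : 0 < A := by positivity
  have hBpos : 0 < B := by positivity
  have hCpos : 0 < C := by positivity
  have hkey : A * B ≤ 4 * C ^ 2 := by
    rw [hA, hB, hC, ← sub_nonneg]
    have hexp : 4 * (1 + P / (1 + a * P)) ^ 2 -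
        (1 + (1 + s) ^ 2 * P) * ((1 + P) / (1 + a * P)) =
        ((4 * (1 + a * P + P) ^ 2 - (1 + (1 + s) ^ 2 * P) * (1 + P) * (1 + a * P)) /
          (1 + a * P) ^ 2) := by
      field_simp
    rw [hexp]
    apply div_nonneg _ (by positivity)
    nlinarith [sq_nonneg (1 - s), sq_nonneg P, sq_nonneg (s * P), mul_pos hP hN,
      sq_nonneg ((1 - s) * P), mul_nonneg (mul_nonneg hs0 hP.le) hP.le,
      mul_nonneg (mul_nonneg ha0.le hP.le) hP.le]
  have h1 : Real.logb 2 (A * B) = Real.logb 2 A + Real.logb 2 B :=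
    Real.logb_mul hApos.ne' hBpos.ne'
  have h2 : Real.logb 2 (C ^ 2) = 2 * Real.logb 2 C := by
    rw [Real.logb_pow]; push_cast; ring
  have h3 : Real.logb 2 (A * B / C ^ 2) ≤ Real.logb 2 4 := by
    apply (Real.logb_le_logb (by norm_num) (by positivity) (by norm_num)).mpr
    rw [div_le_iff₀ (by positivity)]
    linarith
  have h4 : Real.logb 2 (4:ℝ) = 2 := by
    rw [show (4:ℝ) = 2 ^ 2 by norm_num, Real.logb_pow,
      Real.logb_self_eq_one (by norm_num)]
    norm_num
  rw [Real.logb_div (by positivity) (by positivity), h1, h2] at h3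
  linarith
end

section
/- For all real numbers a and P with a > 1, P > 0 and aP ≤ 1, (1/2)·log₂(1 + (1+√a)²·P) − log₂(1 + P/(1+aP)) ≤ 1. -/
/-- Case `a > 1` of Theorem 4 (noise-limited regime `aP ≤ 1`): treating
interference as noise is within 1 bit of the upper bound `C((1+√a)²P)`. -/
theorem stmt_14 (a P : ℝ) (ha : 1 < a) (hP : 0 < P) (haP : a * P ≤ 1) :
    (1 / 2) * Real.logb 2 (1 + (1 + Real.sqrt a) ^ 2 * P) -
      Real.logb 2 (1 + P / (1 + a * P)) ≤ 1 := by
  have ha0 : (0:ℝ) ≤ a := by linarith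
  have hden : (0:ℝ) < 1 + a * P := by nlinarith
  set x := P / (1 + a * P) with hx
  have hx0 : 0 < x := div_pos hP hden
  have hsa0 : 0 ≤ Real.sqrt a := Real.sqrt_nonneg a
  have hsa2 : Real.sqrt a ^ 2 = a := Real.sq_sqrt ha0
  have hsP2 : Real.sqrt P ^ 2 = P := Real.sq_sqrt hP.le
  have hsP0 : 0 ≤ Real.sqrt P := Real.sqrt_nonneg P
  -- √a * P ≤ √P
  have h1 : Real.sqrt a * P ≤ Real.sqrt P := by
    have : Real.sqrt a * P = Real.sqrt (a * P ^ 2) := by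
      rw [Real.sqrt_mul ha0, Real.sqrt_sq hP.le]
    rw [this]
    apply Real.sqrt_le_sqrt
    nlinarith
  -- 2√P ≤ 1 + P
  have h2 : 2 * Real.sqrt P ≤ 1 + P := by nlinarith [sq_nonneg (1 - Real.sqrt P)]
  -- x ≥ P/2
  have h3 : P / 2 ≤ x := by
    rw [hx]
    apply div_le_div_of_nonneg_left hP.le hden
    linarith
  -- key inequality
  have key : 1 + (1 + Real.sqrt a) ^ 2 * P ≤ 4 * (1 + x) ^ 2 := by
    have e : (1 + Real.sqrt a) ^ 2 * P = P + 2 * (Real.sqrt a * P) + a * P := by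
      ring_nf; nlinarith [hsa2]
    nlinarith [sq_nonneg (1 + x), h3, h1, h2, hx0]
  have hApos : 0 < 1 + (1 + Real.sqrt a) ^ 2 * P := by positivity
  have hlog : Real.logb 2 (1 + (1 + Real.sqrt a) ^ 2 * P) ≤
      Real.logb 2 (4 * (1 + x) ^ 2) :=
    Real.logb_le_logb_of_le (by norm_num) hApos key
  have hcalc : Real.logb 2 (4 * (1 + x) ^ 2) = 2 + 2 * Real.logb 2 (1 + x) := by
    rw [Real.logb_mul (by norm_num) (by positivity), Real.logb_pow,
      show (4:ℝ) = 2 ^ (2:ℕ) by norm_num, Real.logb_pow, Real.logb_self_eq_one] <;>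
      norm_num
  have := hlog.trans_eq hcalc
  linarith
end

section
/- Fix a real number α with 0 < α < 1. With a = a(P) = P^{α−1} and b = b(P) = (1+√a)², define R1'(P) = (1/2)·log₂( (2a+1)·(a·b·(1+(2+a)·P) + a − 2√a) / (4a²·(1+b)) ). Then the limit as P → ∞ of R1'(P) / [(1/2)·log₂(1+P)] equals 2 − α. -/
open Filter

noncomputable def gAux (α : ℝ) : ℝ → ℝ := fun P =>
  ((2 * P ^ (α - 1) + 1) *
      ((1 + Real.sqrt (P ^ (α - 1))) ^ 2 * (1 / P + 2 + P ^ (α - 1)) + 1 / P -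
        2 * Real.sqrt (P ^ (α - 1)) / (P ^ (α - 1) * P))) /
    (4 * (1 + (1 + Real.sqrt (P ^ (α - 1))) ^ 2))

lemma aux_div (c d x y : ℝ) (hc : c ≠ 0) (hd : d ≠ 0) :
    (c * (x / d)) / (c * (y / d)) = x / y := by
  rcases eq_or_ne y 0 with h | h
  · simp [h]
  · field_simp

/-- GDOF of the achievable rate `R1' = R1 + 2C(Pu/2)` under the universal
power allocation, with `a = P^(α−1)` and `b = (1+√a)²`: for `0 < α < 1`,
the limit of `R1'(P)/C(P)` as `P → ∞` equals `2 − α`. -/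
theorem stmt_18 (α : ℝ) (hα0 : 0 < α) (hα1 : α < 1) :
    Tendsto
      (fun P : ℝ =>
        (let a : ℝ := P ^ (α - 1)
         let b : ℝ := (1 + Real.sqrt a) ^ 2
         (1 / 2) * Real.logb 2
           ((2 * a + 1) * (a * b * (1 + (2 + a) * P) + a - 2 * Real.sqrt a) /
             (4 * a ^ 2 * (1 + b)))) /
          ((1 / 2) * Real.logb 2 (1 + P)))
      atTop (nhds (2 - α)) := by
  have h1α : (0:ℝ) < 1 - α := by linarith
  have hA : Tendsto (fun P : ℝ => P ^ (α - 1)) atTop (nhds 0) := by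
    simpa [neg_sub] using tendsto_rpow_neg_atTop h1α
  have hS : Tendsto (fun P : ℝ => Real.sqrt (P ^ (α - 1))) atTop (nhds 0) := by
    have := (Real.continuous_sqrt.tendsto 0).comp hA
    simpa [Function.comp_def] using this
  have hB : Tendsto (fun P : ℝ => (1 + Real.sqrt (P ^ (α - 1))) ^ 2) atTop (nhds 1) := by
    have := ((tendsto_const_nhds (x := (1:ℝ)) (f := atTop)).add hS).pow 2
    simpa using this
  have hInv : Tendsto (fun P : ℝ => 1 / P) atTop (nhds 0) := by
    simpa [one_div] using tendsto_inv_atTop_zero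
  have hAP : Tendsto (fun P : ℝ => P ^ (α - 1) * P) atTop atTop := by
    apply Tendsto.congr' _ (tendsto_rpow_atTop hα0)
    filter_upwards [eventually_gt_atTop (0:ℝ)] with P hP
    rw [← Real.rpow_add_one hP.ne' (α - 1)]
    ring_nf
  have hT : Tendsto (fun P : ℝ => 2 * Real.sqrt (P ^ (α - 1)) / (P ^ (α - 1) * P))
      atTop (nhds 0) := Tendsto.div_atTop (hS.const_mul 2) hAP
  have hg : Tendsto (gAux α) atTop (nhds (1/4)) := by
    have hnum : Tendsto (fun P : ℝ => (2 * P ^ (α - 1) + 1) *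
        ((1 + Real.sqrt (P ^ (α - 1))) ^ 2 * (1 / P + 2 + P ^ (α - 1)) + 1 / P -
          2 * Real.sqrt (P ^ (α - 1)) / (P ^ (α - 1) * P))) atTop
        (nhds ((2 * 0 + 1) * (1 * (0 + 2 + 0) + 0 - 0))) :=
      ((hA.const_mul 2).add tendsto_const_nhds).mul
        (((hB.mul ((hInv.add tendsto_const_nhds).add hA)).add hInv).sub hT)
    have hden : Tendsto (fun P : ℝ => 4 * (1 + (1 + Real.sqrt (P ^ (α - 1))) ^ 2)) atTop
        (nhds (4 * (1 + 1))) := (tendsto_const_nhds.add hB).const_mul 4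
    have := hnum.div hden (by norm_num)
    unfold gAux
    convert this using 2
    all_goals norm_num
  have hL : Tendsto (fun P : ℝ => Real.log (1 + P)) atTop atTop :=
    Real.tendsto_log_atTop.comp (tendsto_atTop_add_const_left _ 1 tendsto_id)
  have hlogg : Tendsto (fun P : ℝ => Real.log (gAux α P) / Real.log (1 + P)) atTop (nhds 0) := by
    exact Tendsto.div_atTop ((Real.continuousAt_log (by norm_num)).tendsto.comp hg) hL
  have hratio : Tendsto (fun P : ℝ => Real.log P / Real.log (1 + P)) atTop (nhds 1) := by
    have hdiff : Tendsto (fun P : ℝ => Real.log (1 + P) - Real.log P) atTop (nhds 0) := by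
      have h0 : Tendsto (fun P : ℝ => 1 / P + 1) atTop (nhds 1) := by
        simpa using hInv.add (tendsto_const_nhds (x := (1:ℝ)) (f := atTop))
      have h1 : Tendsto (fun P : ℝ => Real.log (1 / P + 1)) atTop (nhds 0) := by
        simpa [Function.comp_def] using (Real.continuousAt_log one_ne_zero).tendsto.comp h0
      apply Tendsto.congr' _ h1
      filter_upwards [eventually_gt_atTop (0:ℝ)] with P hP
      rw [show (1:ℝ) / P + 1 = (1 + P) / P by field_simp,
        Real.log_div (by positivity) hP.ne']
    have h2 : Tendsto (fun P : ℝ =>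
        1 - (Real.log (1 + P) - Real.log P) / Real.log (1 + P)) atTop (nhds (1 - 0)) :=
      tendsto_const_nhds.sub (hdiff.div_atTop hL)
    apply Tendsto.congr' _ (by simpa using h2)
    filter_upwards [hL.eventually_gt_atTop 0] with P hLP
    field_simp
    ring
  have hH : Tendsto (fun P : ℝ =>
      (2 - α) * (Real.log P / Real.log (1 + P)) +
        Real.log (gAux α P) / Real.log (1 + P)) atTop (nhds (2 - α)) := by
    have := (hratio.const_mul (2 - α)).add hlogg
    simpa using this
  apply Tendsto.congr' _ hH
  filter_upwards [eventually_gt_atTop (1:ℝ),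
    hg.eventually (eventually_gt_nhds (show (0:ℝ) < 1/4 by norm_num))] with P hP1 hgP
  have hP : (0:ℝ) < P := lt_trans one_pos hP1
  have ha : (0:ℝ) < P ^ (α - 1) := Real.rpow_pos_of_pos hP _
  have hb : (0:ℝ) < 1 + (1 + Real.sqrt (P ^ (α - 1))) ^ 2 := by positivity
  have hx : (0:ℝ) < P ^ (2 - α) := Real.rpow_pos_of_pos hP _
  have hx2 : P ^ (2 - α) = P / P ^ (α - 1) := by
    rw [eq_div_iff ha.ne', ← Real.rpow_add hP]
    norm_num
  have key : (2 * P ^ (α - 1) + 1) *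
      (P ^ (α - 1) * (1 + Real.sqrt (P ^ (α - 1))) ^ 2 * (1 + (2 + P ^ (α - 1)) * P) +
        P ^ (α - 1) - 2 * Real.sqrt (P ^ (α - 1))) /
      (4 * (P ^ (α - 1)) ^ 2 * (1 + (1 + Real.sqrt (P ^ (α - 1))) ^ 2)) =
      P ^ (2 - α) * gAux α P := by
    unfold gAux
    rw [hx2]
    field_simp
    ring
  show (2 - α) * (Real.log P / Real.log (1 + P)) +
      Real.log (gAux α P) / Real.log (1 + P) =
    ((1 / 2) * Real.logb 2
        ((2 * P ^ (α - 1) + 1) *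
          (P ^ (α - 1) * (1 + Real.sqrt (P ^ (α - 1))) ^ 2 * (1 + (2 + P ^ (α - 1)) * P) +
            P ^ (α - 1) - 2 * Real.sqrt (P ^ (α - 1))) /
          (4 * (P ^ (α - 1)) ^ 2 * (1 + (1 + Real.sqrt (P ^ (α - 1))) ^ 2)))) /
      ((1 / 2) * Real.logb 2 (1 + P))
  rw [key]
  simp only [Real.logb]
  rw [aux_div _ _ _ _ (by norm_num) (Real.log_pos (by norm_num)).ne',
    Real.log_mul hx.ne' hgP.ne', Real.log_rpow hP, add_div, mul_div_assoc]
end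

section
/- Fix real numbers α with 0 < α < 1 and β ≥ 0. With a = a(P) = P^{α−1} and b = b(P) = (1+√a)², define R2'(P) = β·(1/2)·log₂(1+P) + log₂( ((2a+1) + b·(1 + a + a²·P)) / (a·(1+b)) ). Then the limit as P → ∞ of R2'(P) / [(1/2)·log₂(1+P)] equals β + 2·(1−α) + 2·max{0, 2α−1}. -/
open Filter

lemma loglim1 : Tendsto (fun P : ℝ => Real.log P / Real.log (1+P)) atTop (nhds 1) := by
  have hinv : Tendsto (fun P : ℝ => (Real.log (1+P))⁻¹) atTop (nhds 0) := by
    apply Tendsto.inv_tendsto_atTop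
    exact Real.tendsto_log_atTop.comp (tendsto_atTop_add_const_left _ 1 tendsto_id)
  have hdiff : Tendsto (fun P : ℝ => Real.log (1+P) - Real.log P) atTop (nhds 0) := by
    have h1 : Tendsto (fun P : ℝ => 1 + P⁻¹) atTop (nhds (1+0)) :=
      tendsto_const_nhds.add tendsto_inv_atTop_zero
    have h2 : Tendsto (fun P : ℝ => Real.log (1+P⁻¹)) atTop (nhds 0) := by
      have := (Real.continuousAt_log one_ne_zero).tendsto.comp (by simpa using h1)
      simpa [Function.comp_def] using this
    apply h2.congr'
    filter_upwards [eventually_gt_atTop (0:ℝ)] with P hP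
    rw [← Real.log_div (by positivity) (ne_of_gt hP)]
    congr 1
    field_simp
    ring
  have H : Tendsto (fun P:ℝ => 1 - (Real.log (1+P) - Real.log P)*(Real.log (1+P))⁻¹)
      atTop (nhds (1 - 0*0)) := tendsto_const_nhds.sub (hdiff.mul hinv)
  have H' : Tendsto (fun P:ℝ => 1 - (Real.log (1+P) - Real.log P)*(Real.log (1+P))⁻¹)
      atTop (nhds 1) := by simpa using H
  apply H'.congr'
  filter_upwards [eventually_gt_atTop (1:ℝ)] with P hP
  have hL : (0:ℝ) < Real.log (1+P) := Real.log_pos (by linarith)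
  field_simp
  ring

lemma ratio_log (m c : ℝ) (g : ℝ → ℝ) (hc : 0 < c)
    (hf : Tendsto (fun P => g P / P ^ m) atTop (nhds c)) :
    Tendsto (fun P => Real.log (g P) / ((1/2 : ℝ) * Real.log (1+P))) atTop (nhds (2*m)) := by
  have hinv : Tendsto (fun P : ℝ => (Real.log (1+P))⁻¹) atTop (nhds 0) := by
    apply Tendsto.inv_tendsto_atTop
    exact Real.tendsto_log_atTop.comp (tendsto_atTop_add_const_left _ 1 tendsto_id)
  have hlogf : Tendsto (fun P => Real.log (g P / P^m)) atTop (nhds (Real.log c)) :=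
    (Real.continuousAt_log hc.ne').tendsto.comp hf
  have hmain : Tendsto (fun P:ℝ => 2*m*(Real.log P/Real.log (1+P)) +
      2*(Real.log (g P/P^m))*(Real.log (1+P))⁻¹) atTop
      (nhds (2*m*1 + 2*(Real.log c)*0)) :=
    (tendsto_const_nhds.mul loglim1).add ((tendsto_const_nhds.mul hlogf).mul hinv)
  have hmain' : Tendsto (fun P:ℝ => 2*m*(Real.log P/Real.log (1+P)) +
      2*(Real.log (g P/P^m))*(Real.log (1+P))⁻¹) atTop (nhds (2*m)) := by
    simpa using hmain
  apply hmain'.congr'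
  filter_upwards [eventually_gt_atTop (1:ℝ), hf.eventually (eventually_gt_nhds hc)]
    with P hP hgpos
  have hP0 : (0:ℝ) < P := by linarith
  have hpm : (0:ℝ) < P ^ m := Real.rpow_pos_of_pos hP0 m
  have hL : (0:ℝ) < Real.log (1+P) := Real.log_pos (by linarith)
  have hg : g P = P^m * (g P / P^m) := by field_simp
  conv_rhs => rw [hg]
  rw [Real.log_mul hpm.ne' (ne_of_gt hgpos), Real.log_rpow hP0]
  field_simp

/-- GDOF of the achievable rate `R2' = R2 + 2C(Pu/2)` under the universal
power allocation, with `a = P^(α−1)`, `b = (1+√a)²` and `C12 = β·C(P)`: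
for `0 < α < 1`, `β ≥ 0`, the limit of `R2'(P)/C(P)` as `P → ∞` equals
`β + 2(1−α) + 2·max{0, 2α−1}`. -/
theorem stmt_19 (α β : ℝ) (hα0 : 0 < α) (hα1 : α < 1) (hβ : 0 ≤ β) :
    Tendsto
      (fun P : ℝ =>
        (let a : ℝ := P ^ (α - 1)
         let b : ℝ := (1 + Real.sqrt a) ^ 2
         β * ((1 / 2) * Real.logb 2 (1 + P)) +
           Real.logb 2 (((2 * a + 1) + b * (1 + a + a ^ 2 * P)) / (a * (1 + b)))) /
          ((1 / 2) * Real.logb 2 (1 + P)))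
      atTop (nhds (β + 2 * (1 - α) + 2 * max 0 (2 * α - 1))) := by
  have hA : Tendsto (fun P:ℝ => P^(α-1)) atTop (nhds 0) := by
    have := tendsto_rpow_neg_atTop (show (0:ℝ) < 1-α by linarith)
    simpa [neg_sub] using this
  have hsq : Tendsto (fun P:ℝ => Real.sqrt (P^(α-1))) atTop (nhds 0) := by
    have := (Real.continuous_sqrt.tendsto 0).comp hA
    simpa [Function.comp_def] using this
  have hB : Tendsto (fun P:ℝ => (1+Real.sqrt (P^(α-1)))^2) atTop (nhds 1) := by
    have h1 : Tendsto (fun P:ℝ => 1 + Real.sqrt (P^(α-1))) atTop (nhds (1+0)) :=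
      tendsto_const_nhds.add hsq
    have := h1.pow 2
    simpa using this
  have key : ∀ P : ℝ, 0 < P → (P^(α-1))^2 * P = P^(2*α-1) := by
    intro P hP
    rw [sq, ← Real.rpow_add hP, ← Real.rpow_add_one (ne_of_gt hP)]
    congr 1
    ring
  set Nf : ℝ → ℝ := fun P => (2*P^(α-1)+1) +
      (1+Real.sqrt (P^(α-1)))^2*(1+P^(α-1)+P^(2*α-1)) with hNf
  set Df : ℝ → ℝ := fun P => P^(α-1)*(1+(1+Real.sqrt (P^(α-1)))^2) with hDf
  set m := max 0 (2*α-1) with hm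
  have hNlog : Tendsto (fun P => Real.log (Nf P) / ((1/2:ℝ)*Real.log (1+P)))
      atTop (nhds (2*m)) := by
    rcases le_or_gt (2*α-1) 0 with h | h
    · have hm0 : m = 0 := max_eq_left h
      set t : ℝ := if 2*α-1 = 0 then 1 else 0 with htdef
      have ht0 : 0 ≤ t := by rw [htdef]; split_ifs <;> norm_num
      have ht : Tendsto (fun P:ℝ => P^(2*α-1)) atTop (nhds t) := by
        rw [htdef]
        split_ifs with h0
        · rw [h0]; simpa using (tendsto_const_nhds : Tendsto (fun _:ℝ => (1:ℝ)) atTop (nhds 1))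
        · have := tendsto_rpow_neg_atTop (show (0:ℝ) < -(2*α-1) by
            rcases lt_or_eq_of_le h with h'|h'; · linarith
            · exact absurd h' h0)
          simpa using this
      have hNlim : Tendsto Nf atTop (nhds (2+t)) := by
        have H : Tendsto (fun P:ℝ => (2*P^(α-1)+1) +
            (1+Real.sqrt (P^(α-1)))^2*(1+P^(α-1)+P^(2*α-1)))
            atTop (nhds ((2*0+1)+1*(1+0+t))) :=
          ((tendsto_const_nhds.mul hA).add tendsto_const_nhds).add
            (hB.mul ((tendsto_const_nhds.add hA).add ht))
        rw [hNf]
        convert H using 2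
        ring
      rw [hm0]
      have hf : Tendsto (fun P => Nf P / P ^ (0:ℝ)) atTop (nhds (2+t)) := by
        apply hNlim.congr
        intro P
        rw [Real.rpow_zero, div_one]
      have := ratio_log 0 (2+t) Nf (by linarith) hf
      simpa using this
    · have hm1 : m = 2*α-1 := max_eq_right h.le
      rw [hm1]
      apply ratio_log (2*α-1) 1 Nf one_pos
      have hPneg : Tendsto (fun P:ℝ => P^(-(2*α-1))) atTop (nhds 0) :=
        tendsto_rpow_neg_atTop h
      have Hin : Tendsto (fun P:ℝ => (2*P^(α-1)+1+(1+Real.sqrt (P^(α-1)))^2*(1+P^(α-1))))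
          atTop (nhds (2*0+1+1*(1+0))) :=
        ((tendsto_const_nhds.mul hA).add tendsto_const_nhds).add
          (hB.mul (tendsto_const_nhds.add hA))
      have H := (Hin.mul hPneg).add hB
      have H' : Tendsto (fun P:ℝ =>
          (2*P^(α-1)+1+(1+Real.sqrt (P^(α-1)))^2*(1+P^(α-1)))*P^(-(2*α-1)) +
          (1+Real.sqrt (P^(α-1)))^2) atTop (nhds 1) := by simpa using H
      apply H'.congr'
      filter_upwards [eventually_gt_atTop (0:ℝ)] with P hP
      have hpm : (0:ℝ) < P ^ (2*α-1) := Real.rpow_pos_of_pos hP _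
      rw [Real.rpow_neg hP.le, hNf]
      field_simp
      ring
  have hDlog : Tendsto (fun P => Real.log (Df P) / ((1/2:ℝ)*Real.log (1+P)))
      atTop (nhds (2*(α-1))) := by
    apply ratio_log (α-1) 2 Df (by norm_num)
    have H : Tendsto (fun P:ℝ => 1+(1+Real.sqrt (P^(α-1)))^2) atTop (nhds 2) := by
      have h1 : Tendsto (fun P:ℝ => 1+(1+Real.sqrt (P^(α-1)))^2) atTop (nhds (1+1)) :=
        tendsto_const_nhds.add hB
      norm_num at h1
      exact h1
    apply H.congr'
    filter_upwards [eventually_gt_atTop (0:ℝ)] with P hP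
    have ha : (0:ℝ) < P^(α-1) := Real.rpow_pos_of_pos hP _
    rw [hDf]
    field_simp
  have hfinal : Tendsto (fun P => β + (Real.log (Nf P) / ((1/2:ℝ)*Real.log (1+P)) -
      Real.log (Df P) / ((1/2:ℝ)*Real.log (1+P)))) atTop (nhds (β + (2*m - 2*(α-1)))) :=
    tendsto_const_nhds.add (hNlog.sub hDlog)
  have hval : β + 2*(1-α) + 2*m = β + (2*m - 2*(α-1)) := by ring
  rw [hval]
  apply hfinal.congr'
  filter_upwards [eventually_gt_atTop (1:ℝ)] with P hP
  have hP0 : (0:ℝ) < P := by linarith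
  have ha : (0:ℝ) < P^(α-1) := Real.rpow_pos_of_pos hP0 _
  have hb : (0:ℝ) < (1+Real.sqrt (P^(α-1)))^2 := by positivity
  have hc : (0:ℝ) < P^(2*α-1) := Real.rpow_pos_of_pos hP0 _
  have hNpos : 0 < Nf P := by
    have hpos : (0:ℝ) < (1+Real.sqrt (P^(α-1)))^2*(1+P^(α-1)+P^(2*α-1)) :=
      mul_pos hb (by linarith)
    show (0:ℝ) < (2*P^(α-1)+1) + (1+Real.sqrt (P^(α-1)))^2*(1+P^(α-1)+P^(2*α-1))
    linarith
  have hDpos : 0 < Df P := by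
    show (0:ℝ) < P^(α-1)*(1+(1+Real.sqrt (P^(α-1)))^2)
    exact mul_pos ha (by linarith)
  have hL : (0:ℝ) < Real.log (1+P) := Real.log_pos (by linarith)
  have h2 : (0:ℝ) < Real.log 2 := Real.log_pos one_lt_two
  show β + (Real.log (Nf P) / ((1/2:ℝ)*Real.log (1+P)) -
      Real.log (Df P) / ((1/2:ℝ)*Real.log (1+P))) =
    (β * ((1 / 2) * Real.logb 2 (1 + P)) +
      Real.logb 2 (((2 * P^(α-1) + 1) + (1+Real.sqrt (P^(α-1)))^2 *
        (1 + P^(α-1) + (P^(α-1)) ^ 2 * P)) /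
        (P^(α-1) * (1 + (1+Real.sqrt (P^(α-1)))^2)))) /
      ((1 / 2) * Real.logb 2 (1 + P))
  rw [key P hP0]
  rw [show ((2 * P^(α-1) + 1) + (1+Real.sqrt (P^(α-1)))^2 *
        (1 + P^(α-1) + P^(2*α-1))) = Nf P from rfl,
      show (P^(α-1) * (1 + (1+Real.sqrt (P^(α-1)))^2)) = Df P from rfl]
  rw [Real.logb, Real.logb, Real.log_div hNpos.ne' hDpos.ne']
  field_simp
end
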